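/- arXiv:2602.10786 — 2 statements merged into one kernel-verified Lean document; each statement's English description precedes it below -/
import Mathlib

section
/- Let D = P⁻¹(S + B/2) be an SBP operator, where P is symmetric positive definite, S is skew-symmetric, and B = e_R e_Rᵀ − e_L e_Lᵀ with e_L, e_R the first and last standard basis vectors of ℝ^N. Assume D𝟙 = 0. Then D is nullspace consistent (nul(D) = span{𝟙}) if and only if there exists ν ≠ 0 such that the matrix D̃ = D + ν P⁻¹ e_L e_Lᵀ is invertible. -/
/-!
Write `D = P⁻¹ A` with `A = S + B/2`. As `P` is invertible, `D` and `A` have the same kernel, and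
`D + ν P⁻¹ e_L e_Lᵀ` is invertible iff `A + ν e_L e_Lᵀ` is.

If `A 𝟙 = 0` and `A + w vᵀ` is invertible with `vᵀ𝟙 ≠ 0`, then any `x` with `A x = 0` satisfies
`(A + w vᵀ) x = (A + w vᵀ) ((vᵀx / vᵀ𝟙) 𝟙)`, so `x ∈ span 𝟙`.

Conversely, the energy identity `xᵀ(A + e_L e_Lᵀ)x = (x_N² + x_0²)/2` (the skew part `S`
contributes nothing) shows that `(A + e_L e_Lᵀ) x = 0` forces `x_0 = 0`; then `A x = 0`, so
`x ∈ span 𝟙 = ker A`, and `x_0 = 0` gives `x = 0`.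
-/

open Matrix

namespace Matrix

theorem add_vecMulVec_mulVec {R m : Type*} [CommSemiring R] [Fintype m] (A : Matrix m m R)
    (w v x : m → R) : (A + vecMulVec w v) *ᵥ x = A *ᵥ x + (v ⬝ᵥ x) • w := by
  rw [add_mulVec, vecMulVec_mulVec, op_smul_eq_smul]

section Rank1

variable {K m : Type*} [Field K] [Fintype m] [DecidableEq m] {A : Matrix m m K} {u v w : m → K}

theorem isUnit_add_vecMulVec_of_ker_eq_span
    (hker : LinearMap.ker A.mulVecLin = Submodule.span K {u}) (hvu : v ⬝ᵥ u ≠ 0)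
    (hv : ∀ x, (A + vecMulVec w v) *ᵥ x = 0 → v ⬝ᵥ x = 0) :
    IsUnit (A + vecMulVec w v) := by
  rw [← mulVec_injective_iff_isUnit]
  refine (injective_iff_map_eq_zero (A + vecMulVec w v).mulVecLin).2 fun x hx => ?_
  have hvx := hv x hx
  rw [mulVecLin_apply, add_vecMulVec_mulVec, hvx, zero_smul, add_zero] at hx
  obtain ⟨c, rfl⟩ := Submodule.mem_span_singleton.1 (hker ▸ hx : x ∈ Submodule.span K {u})
  rw [dotProduct_smul, smul_eq_mul, mul_eq_zero] at hvx
  rw [hvx.resolve_right hvu, zero_smul]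

theorem ker_mulVecLin_eq_span_of_isUnit_add_vecMulVec (hAu : A *ᵥ u = 0) (hvu : v ⬝ᵥ u ≠ 0)
    (h : IsUnit (A + vecMulVec w v)) :
    LinearMap.ker A.mulVecLin = Submodule.span K {u} := by
  refine le_antisymm (fun x hx => ?_) ((Submodule.span_singleton_le_iff_mem _ _).2 hAu)
  rw [LinearMap.mem_ker, mulVecLin_apply] at hx
  refine Submodule.mem_span_singleton.2
    ⟨(v ⬝ᵥ x) / (v ⬝ᵥ u), mulVec_injective_iff_isUnit.2 h ?_⟩
  rw [add_vecMulVec_mulVec, add_vecMulVec_mulVec, mulVec_smul, hAu, hx, dotProduct_smul,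
    smul_eq_mul, div_mul_cancel₀ _ hvu, smul_zero]

end Rank1

section SBP

variable {K m : Type*} [Field K] [LinearOrder K] [IsStrictOrderedRing K] [Fintype m]

theorem dotProduct_mulVec_self_eq_zero_of_transpose_eq_neg {S : Matrix m m K} (hS : Sᵀ = -S)
    (x : m → K) : x ⬝ᵥ S *ᵥ x = 0 := by
  have h : x ⬝ᵥ S *ᵥ x = -(x ⬝ᵥ S *ᵥ x) := by
    conv_lhs => rw [dotProduct_mulVec, ← mulVec_transpose, hS, neg_mulVec, dotProduct_comm]
    rw [dotProduct_neg]
  linarith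

theorem dotProduct_sbp_add_vecMulVec_mulVec {S : Matrix m m K} (hS : Sᵀ = -S)
    (eL eR x : m → K) :
    x ⬝ᵥ (S + (1 / 2 : K) • (vecMulVec eR eR - vecMulVec eL eL) + vecMulVec eL eL) *ᵥ x =
      ((eR ⬝ᵥ x) ^ 2 + (eL ⬝ᵥ x) ^ 2) / 2 := by
  simp only [add_mulVec, smul_mulVec, sub_mulVec, vecMulVec_mulVec, op_smul_eq_smul,
    dotProduct_add, dotProduct_smul, dotProduct_sub,
    dotProduct_mulVec_self_eq_zero_of_transpose_eq_neg hS, smul_eq_mul]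
  rw [dotProduct_comm x eR, dotProduct_comm x eL]
  ring

theorem dotProduct_eq_zero_of_sbp_add_vecMulVec_mulVec_eq_zero {S : Matrix m m K} (hS : Sᵀ = -S)
    {eL eR x : m → K}
    (hx : (S + (1 / 2 : K) • (vecMulVec eR eR - vecMulVec eL eL) + vecMulVec eL eL) *ᵥ x = 0) :
    eL ⬝ᵥ x = 0 := by
  have h := dotProduct_sbp_add_vecMulVec_mulVec hS eL eR x
  rw [hx, dotProduct_zero] at h
  nlinarith [sq_nonneg (eR ⬝ᵥ x), sq_nonneg (eL ⬝ᵥ x)]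

end SBP

end Matrix

theorem stmt_1_general (n : ℕ) (P S : Matrix (Fin (n + 1)) (Fin (n + 1)) ℝ)
    (hP : P.PosDef) (hS : Sᵀ = -S)
    (eL eR : Fin (n + 1) → ℝ) (heL : eL = Pi.single 0 1)
    (B D : Matrix (Fin (n + 1)) (Fin (n + 1)) ℝ)
    (hB : B = vecMulVec eR eR - vecMulVec eL eL)
    (hD : D = P⁻¹ * (S + (1 / 2 : ℝ) • B))
    (hconsistent : D.mulVec (fun _ => 1) = 0) :
    LinearMap.ker D.mulVecLin = Submodule.span ℝ {(fun _ => 1 : Fin (n + 1) → ℝ)} ↔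
      ∃ ν : ℝ, ν ≠ 0 ∧ IsUnit (D + ν • (P⁻¹ * vecMulVec eL eL)) := by
  subst hD hB
  set A := S + (1 / 2 : ℝ) • (vecMulVec eR eR - vecMulVec eL eL)
  have hPinv : IsUnit P⁻¹ := isUnit_nonsing_inv_iff.2 hP.isUnit
  have hPinv_inj : Function.Injective P⁻¹.mulVec := mulVec_injective_iff_isUnit.2 hPinv
  have hPinv_ker : LinearMap.ker P⁻¹.mulVecLin = ⊥ :=
    ker_mulVecLin_eq_bot_iff.2 fun x hx => hPinv_inj (hx.trans (mulVec_zero _).symm)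
  have hA1 : A *ᵥ (fun _ => 1) = 0 := by
    rw [← mulVec_mulVec] at hconsistent
    exact hPinv_inj (hconsistent.trans (mulVec_zero _).symm)
  have heL1 : eL ⬝ᵥ (fun _ => 1) ≠ 0 := by simp [heL]
  have hperturb (ν : ℝ) :
      P⁻¹ * A + ν • (P⁻¹ * vecMulVec eL eL) = P⁻¹ * (A + vecMulVec (ν • eL) eL) := by
    rw [smul_vecMulVec, Matrix.mul_add P⁻¹ A, mul_smul_comm]
  rw [mulVecLin_mul, LinearMap.ker_comp_of_ker_eq_bot _ hPinv_ker]
  simp_rw [hperturb, hPinv.mul_left_iff]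
  constructor
  · refine fun hker => ⟨1, one_ne_zero, ?_⟩
    rw [one_smul]
    exact isUnit_add_vecMulVec_of_ker_eq_span hker heL1 fun x hx =>
      dotProduct_eq_zero_of_sbp_add_vecMulVec_mulVec_eq_zero hS hx
  · rintro ⟨ν, -, hν⟩
    exact ker_mulVecLin_eq_span_of_isUnit_add_vecMulVec hA1 heL1 hν

/-- For an SBP operator `D = P⁻¹ (S + B/2)` with `P` symmetric positive definite,
`S` skew-symmetric, `B = e_R e_Rᵀ - e_L e_Lᵀ`, and `D 𝟙 = 0`, nullspace consistency
(`nul D = span {𝟙}`) holds iff `D̃ = D + ν P⁻¹ e_L e_Lᵀ` is invertible for some `ν ≠ 0`. -/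
theorem stmt_1 (n : ℕ) (P S : Matrix (Fin (n + 1)) (Fin (n + 1)) ℝ)
    (hP : P.PosDef) (hPsymm : P.IsSymm) (hS : Sᵀ = -S)
    (eL eR : Fin (n + 1) → ℝ) (heL : eL = Pi.single 0 1) (heR : eR = Pi.single (Fin.last n) 1)
    (B D : Matrix (Fin (n + 1)) (Fin (n + 1)) ℝ)
    (hB : B = vecMulVec eR eR - vecMulVec eL eL)
    (hD : D = P⁻¹ * (S + (1 / 2 : ℝ) • B))
    (hconsistent : D.mulVec (fun _ => 1) = 0) :
    LinearMap.ker D.mulVecLin = Submodule.span ℝ {(fun _ => 1 : Fin (n + 1) → ℝ)} ↔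
      ∃ ν : ℝ, ν ≠ 0 ∧ IsUnit (D + ν • (P⁻¹ * vecMulVec eL eL)) :=
  stmt_1_general n P S hP hS eL eR heL B D hB hD hconsistent
end

section
/- Let D = P⁻¹(S + B/2) with P symmetric positive definite and S skew-symmetric. Then for any ν, the matrix P D̃ = S + B/2 + ν e_L e_Lᵀ has symmetric part (1/2)(e_R e_Rᵀ + (2ν − 1) e_L e_Lᵀ). In particular, if ν ≥ 1/2, the symmetric part of P D̃ is positive semidefinite, and hence every eigenvalue λ of D̃ satisfies Re(λ) ≥ 0. -/
/-!
The skew part `S` cancels in `M + Mᵀ`, leaving `e_R e_Rᵀ + (2ν - 1) e_L e_Lᵀ`, a sum of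
rank-one positive semidefinite matrices once `ν ≥ 1/2`. If `D̃ v = μ v` with `v ≠ 0`, then
`v* M v = μ (v* P v)` because `M = P D̃`; here `v* P v > 0` is real, and
`Re (v* M v) = xᵀ M x + yᵀ M y ≥ 0` for `v = x + i y`, so `Re μ ≥ 0`.
-/

open Matrix
open scoped ComplexOrder

namespace Matrix

variable {n : Type*}

theorem half_smul_add_transpose_eq_of_skew {K : Type*} [Field K] [NeZero (2 : K)]
    {S M : Matrix n n K}
    (hS : Sᵀ = -S) (u w : n → K) (ν : K)
    (hM : M = S + (1 / 2 : K) • (vecMulVec u u - vecMulVec w w) + ν • vecMulVec w w) :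
    (1 / 2 : K) • (M + Mᵀ) = (1 / 2 : K) • (vecMulVec u u + (2 * ν - 1) • vecMulVec w w) := by
  subst hM
  simp only [transpose_add, transpose_smul, transpose_sub, transpose_vecMulVec, hS]
  match_scalars <;> field_simp <;> ring

variable [Fintype n]

theorem re_nonneg_of_mem_spectrum_of_posDef_mul {𝕜 : Type*} [RCLike 𝕜] [DecidableEq n]
    {P A : Matrix n n 𝕜} (hP : P.PosDef)
    (hPA : ∀ x : n → 𝕜, 0 ≤ RCLike.re (star x ⬝ᵥ (P * A) *ᵥ x))
    {μ : 𝕜} (hμ : μ ∈ spectrum 𝕜 A) : 0 ≤ RCLike.re μ := by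
  obtain ⟨v, hv⟩ := (Module.End.hasEigenvalue_iff_mem_spectrum.mpr
    ((spectrum_toLin' A).symm ▸ hμ)).exists_hasEigenvector
  have hc := RCLike.pos_iff.mp (hP.dotProduct_mulVec_pos hv.2)
  set c := star v ⬝ᵥ P *ᵥ v
  have hc_real : c = (RCLike.re c : 𝕜) := (RCLike.ext_iff.mpr ⟨by simp, by simp [hc.2]⟩)
  have hAv : A *ᵥ v = μ • v := hv.apply_eq_smul
  have hform : star v ⬝ᵥ (P * A) *ᵥ v = μ * (RCLike.re c : 𝕜) := by
    rw [← mulVec_mulVec, hAv, mulVec_smul, dotProduct_smul, smul_eq_mul, ← hc_real]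
  have := hPA v
  rw [hform, RCLike.re_mul_ofReal] at this
  exact nonneg_of_mul_nonneg_left this hc.1

theorem re_star_dotProduct_map_ofReal_mulVec (Q : Matrix n n ℝ) (v : n → ℂ) :
    (star v ⬝ᵥ Q.map (algebraMap ℝ ℂ) *ᵥ v).re
      = (fun i => (v i).re) ⬝ᵥ Q *ᵥ (fun i => (v i).re)
        + (fun i => (v i).im) ⬝ᵥ Q *ᵥ (fun i => (v i).im) := by
  simp only [dotProduct, mulVec, map_apply, Finset.mul_sum, Complex.re_sum, Pi.star_apply,
    Complex.star_def, ← Finset.sum_add_distrib]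
  refine Finset.sum_congr rfl fun i _ => Finset.sum_congr rfl fun j _ => ?_
  simp [Complex.mul_re, Complex.mul_im]

theorem PosDef.map_ofReal {P : Matrix n n ℝ} (hP : P.PosDef) :
    (P.map (algebraMap ℝ ℂ)).PosDef := by
  have hH : (P.map (algebraMap ℝ ℂ)).IsHermitian :=
    hP.isHermitian.map _ fun x => (Complex.conj_ofReal x).symm
  refine posDef_iff_dotProduct_mulVec.mpr ⟨hH, fun v hv => RCLike.pos_iff.mpr ⟨?_, ?_⟩⟩
  · have hv' : (fun i => (v i).re) ≠ 0 ∨ (fun i => (v i).im) ≠ 0 := by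
      by_contra! h
      exact hv (funext fun i => Complex.ext (congrFun h.1 i) (congrFun h.2 i))
    have hpos : ∀ x : n → ℝ, x ≠ 0 → 0 < x ⬝ᵥ P *ᵥ x := fun x hx => by
      simpa using hP.dotProduct_mulVec_pos hx
    have hnonneg : ∀ x : n → ℝ, 0 ≤ x ⬝ᵥ P *ᵥ x := fun x => by
      simpa using hP.posSemidef.dotProduct_mulVec_nonneg x
    show 0 < (star v ⬝ᵥ P.map (algebraMap ℝ ℂ) *ᵥ v).re
    rw [re_star_dotProduct_map_ofReal_mulVec]
    rcases hv' with h | h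
    · exact add_pos_of_pos_of_nonneg (hpos _ h) (hnonneg _)
    · exact add_pos_of_nonneg_of_pos (hnonneg _) (hpos _ h)
  · exact hH.im_star_dotProduct_mulVec_self v

theorem posSemidef_half_smul_vecMulVec_add (u w : n → ℝ) {c : ℝ} (hc : 0 ≤ c) :
    ((1 / 2 : ℝ) • (vecMulVec u u + c • vecMulVec w w)).PosSemidef := by
  have hu := posSemidef_vecMulVec_self_star u
  have hw := posSemidef_vecMulVec_self_star w
  simp only [star_trivial] at hu hw
  exact (hu.add (hw.smul hc)).smul (by norm_num)

theorem PosSemidef.dotProduct_mulVec_nonneg_of_half_smul_add_transpose {M : Matrix n n ℝ}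
    (hM : ((1 / 2 : ℝ) • (M + Mᵀ)).PosSemidef) (x : n → ℝ) : 0 ≤ x ⬝ᵥ M *ᵥ x := by
  have h := hM.dotProduct_mulVec_nonneg x
  rw [star_trivial, smul_mulVec, add_mulVec, dotProduct_smul, dotProduct_add,
    dotProduct_mulVec x Mᵀ, vecMul_transpose, dotProduct_comm (M *ᵥ x), smul_eq_mul] at h
  linarith

end Matrix

theorem stmt_14_general (n : ℕ) (P S : Matrix (Fin (n + 1)) (Fin (n + 1)) ℝ)
    (hP : P.PosDef) (hS : Sᵀ = -S) (ν : ℝ)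
    (B : Matrix (Fin (n + 1)) (Fin (n + 1)) ℝ)
    (hB : B = vecMulVec (Pi.single (Fin.last n) 1) (Pi.single (Fin.last n) 1)
      - vecMulVec (Pi.single 0 1) (Pi.single 0 (1 : ℝ)))
    (M Dt : Matrix (Fin (n + 1)) (Fin (n + 1)) ℝ)
    (hM : M = S + (1 / 2 : ℝ) • B
      + ν • vecMulVec (Pi.single 0 1) (Pi.single 0 (1 : ℝ)))
    (hDt : Dt = P⁻¹ * M) :
    (1 / 2 : ℝ) • (M + Mᵀ)
      = (1 / 2 : ℝ) • (vecMulVec (Pi.single (Fin.last n) 1) (Pi.single (Fin.last n) 1)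
        + (2 * ν - 1) • vecMulVec (Pi.single 0 1) (Pi.single 0 (1 : ℝ))) ∧
    (1 / 2 ≤ ν →
      ((1 / 2 : ℝ) • (M + Mᵀ)).PosSemidef ∧
      ∀ μ ∈ spectrum ℂ (Dt.map (algebraMap ℝ ℂ)), 0 ≤ μ.re) := by
  have hsym := half_smul_add_transpose_eq_of_skew hS _ _ ν (hB ▸ hM)
  refine ⟨hsym, fun hν => ?_⟩
  have hpsd : ((1 / 2 : ℝ) • (M + Mᵀ)).PosSemidef :=
    hsym ▸ posSemidef_half_smul_vecMulVec_add _ _ (by linarith)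
  refine ⟨hpsd, fun μ hμ => ?_⟩
  have hPDt : P.map (algebraMap ℝ ℂ) * Dt.map (algebraMap ℝ ℂ) = M.map (algebraMap ℝ ℂ) := by
    rw [← Matrix.map_mul, hDt, mul_nonsing_inv_cancel_left _ _ ((isUnit_iff_isUnit_det P).mp hP.isUnit)]
  refine re_nonneg_of_mem_spectrum_of_posDef_mul hP.map_ofReal (fun v => ?_) hμ
  rw [hPDt, RCLike.re_to_complex, re_star_dotProduct_map_ofReal_mulVec]
  exact add_nonneg (hpsd.dotProduct_mulVec_nonneg_of_half_smul_add_transpose _)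
    (hpsd.dotProduct_mulVec_nonneg_of_half_smul_add_transpose _)

/-- For `P` SPD and `S` skew-symmetric, the matrix
`P D̃ = S + B/2 + ν e_L e_Lᵀ` has symmetric part `(1/2)(e_R e_Rᵀ + (2ν - 1) e_L e_Lᵀ)`.
If `ν ≥ 1/2` this symmetric part is positive semidefinite and every eigenvalue of `D̃`
has nonnegative real part. -/
theorem stmt_14 (n : ℕ) (P S : Matrix (Fin (n + 1)) (Fin (n + 1)) ℝ)
    (hP : P.PosDef) (hPsymm : P.IsSymm) (hS : Sᵀ = -S) (ν : ℝ)
    (B : Matrix (Fin (n + 1)) (Fin (n + 1)) ℝ)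
    (hB : B = vecMulVec (Pi.single (Fin.last n) 1) (Pi.single (Fin.last n) 1)
      - vecMulVec (Pi.single 0 1) (Pi.single 0 (1 : ℝ)))
    (M Dt : Matrix (Fin (n + 1)) (Fin (n + 1)) ℝ)
    (hM : M = S + (1 / 2 : ℝ) • B
      + ν • vecMulVec (Pi.single 0 1) (Pi.single 0 (1 : ℝ)))
    (hDt : Dt = P⁻¹ * M) :
    (1 / 2 : ℝ) • (M + Mᵀ)
      = (1 / 2 : ℝ) • (vecMulVec (Pi.single (Fin.last n) 1) (Pi.single (Fin.last n) 1)
        + (2 * ν - 1) • vecMulVec (Pi.single 0 1) (Pi.single 0 (1 : ℝ))) ∧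
    (1 / 2 ≤ ν →
      ((1 / 2 : ℝ) • (M + Mᵀ)).PosSemidef ∧
      ∀ μ ∈ spectrum ℂ (Dt.map (algebraMap ℝ ℂ)), 0 ≤ μ.re) :=
  stmt_14_general n P S hP hS ν B hB M Dt hM hDt
end
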